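/- arXiv:2211.13715 — 3 statements merged into one kernel-verified Lean document; each statement's English description precedes it below -/
import Mathlib

section
/- Two-sample score-function gradient identity for the MLE-based GIT objective (Equation (12) of Appendix A.2). Let S be a finite type, k : S, β : S → ℝ with 0 < β k < 1, and A : (S → Bool) → (S → Bool) → ℝ. Define F : ℝ → ℝ by F(t) = ∑_{c' : S → Bool} ∑_{c : S → Bool} w_{Function.update β k t}(c') · w_{Function.update β k t}(c) · A(c', c). Then F has derivative at the point t = β k equal to ∑_{c' : S → Bool} ∑_{c : S → Bool} w_β(c') · w_β(c) · ((b(c',k) + b(c,k) − 2 · β k) / (β k · (1 − β k))) · A(c', c) (in the sense of HasDerivAt). -/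
/-- Bernoulli product weight of a configuration `c` with edge probabilities `β`. -/
noncomputable def bernoulliWeight {S : Type*} [Fintype S] (β : S → ℝ) (c : S → Bool) : ℝ :=
  ∏ s : S, if c s then β s else 1 - β s

/-- Indicator `b(c,k)` of the edge `k` in configuration `c`, as a real number. -/
noncomputable def edgeIndicator {S : Type*} (c : S → Bool) (k : S) : ℝ :=
  if c k then 1 else 0

/-!
The weight `w_{β[k ↦ t]}(c)` is affine in `t`: it is `t` or `1 - t` times the product of the
other factors, so its derivative is `±` that product, which equals `w_β(c) · (b(c,k) - β k) /
(β k (1 - β k))` (the score of the Bernoulli factor at `k`). The two-sample identity is then the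
product rule, the two scores adding up.
-/

open Finset

section BernoulliWeight

variable {S : Type*} [Fintype S] [DecidableEq S]

lemma bernoulliWeight_update (k : S) (β : S → ℝ) (t : ℝ) (c : S → Bool) :
    bernoulliWeight (Function.update β k t) c =
      (if c k then t else 1 - t) * ∏ s ∈ univ.erase k, (if c s then β s else 1 - β s) := by
  rw [bernoulliWeight, ← mul_prod_erase univ _ (mem_univ k), Function.update_self]
  congr 1
  refine prod_congr rfl fun s hs => ?_
  rw [Function.update_of_ne (ne_of_mem_erase hs)]

lemma hasDerivAt_bernoulliWeight_update (k : S) (β : S → ℝ) (t : ℝ) (c : S → Bool) :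
    HasDerivAt (fun t : ℝ => bernoulliWeight (Function.update β k t) c)
      ((if c k then 1 else -1) * ∏ s ∈ univ.erase k, (if c s then β s else 1 - β s)) t := by
  simp_rw [bernoulliWeight_update]
  refine HasDerivAt.mul_const ?_ _
  cases c k
  · simpa using (hasDerivAt_id' t).const_sub 1
  · simpa using hasDerivAt_id' t

lemma bernoulliWeight_mul_score (k : S) (β : S → ℝ) (hβ0 : β k ≠ 0) (hβ1 : β k ≠ 1)
    (c : S → Bool) :
    bernoulliWeight β c * ((edgeIndicator c k - β k) / (β k * (1 - β k))) =
      (if c k then 1 else -1) * ∏ s ∈ univ.erase k, (if c s then β s else 1 - β s) := by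
  have hβ1' : 1 - β k ≠ 0 := sub_ne_zero.mpr hβ1.symm
  rw [← Function.update_eq_self k β, bernoulliWeight_update, Function.update_eq_self,
    edgeIndicator]
  cases c k
  · simp only [Bool.false_eq_true, if_false]
    field_simp
    ring
  · simp only [if_true]
    field_simp

lemma hasDerivAt_bernoulliWeight_update_self (k : S) (β : S → ℝ) (hβ0 : β k ≠ 0)
    (hβ1 : β k ≠ 1) (c : S → Bool) :
    HasDerivAt (fun t : ℝ => bernoulliWeight (Function.update β k t) c)
      (bernoulliWeight β c * ((edgeIndicator c k - β k) / (β k * (1 - β k)))) (β k) := by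
  rw [bernoulliWeight_mul_score k β hβ0 hβ1]
  exact hasDerivAt_bernoulliWeight_update k β (β k) c

end BernoulliWeight

/-- Two-sample score-function gradient identity for the MLE-based GIT objective
(Equation (12) of Appendix A.2). -/
theorem reinforce_gradient_two_sample
    {S : Type*} [Fintype S] [DecidableEq S] (k : S) (β : S → ℝ)
    (hβ0 : 0 < β k) (hβ1 : β k < 1) (A : (S → Bool) → (S → Bool) → ℝ) :
    HasDerivAt
      (fun t : ℝ => ∑ c' : S → Bool, ∑ c : S → Bool,
        bernoulliWeight (Function.update β k t) c' *
          bernoulliWeight (Function.update β k t) c * A c' c)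
      (∑ c' : S → Bool, ∑ c : S → Bool,
        bernoulliWeight β c' * bernoulliWeight β c *
          ((edgeIndicator c' k + edgeIndicator c k - 2 * β k) / (β k * (1 - β k))) *
          A c' c)
      (β k) := by
  refine HasDerivAt.fun_sum fun c' _ => HasDerivAt.fun_sum fun c _ => ?_
  have hderiv := fun c => hasDerivAt_bernoulliWeight_update_self k β hβ0.ne' hβ1.ne c
  have hprod := ((hderiv c').fun_mul (hderiv c)).mul_const (A c' c)
  rw [Function.update_eq_self] at hprod
  exact hprod.congr_deriv (by ring)
end

section
/- ENCO gradient formula for the edge-existence parameter γ (Equation (8) of Appendix C.1): the derivative of the regularized expected graph-fitting loss with respect to γ_{ij} equals σ'(γ_{ij})·σ(θ_{ij})·E_{C_{−ij}}[L_{X_i→X_j} − L_{X_i↛X_j} + λ]. Precisely: let S be a finite type with a distinguished element e : S, let p : S → ℝ, θ λ γ : ℝ, and L : (S → Bool) → ℝ. Define F : ℝ → ℝ by F(g) = ∑_{c : S → Bool} (∏_{s : S} if s = e then (if c s then σ(g)·σ(θ) else 1 − σ(g)·σ(θ)) else (if c s then p s else 1 − p s)) · L(c) + λ · σ(g) ·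 σ(θ). Then F has derivative at g = γ equal to σ(γ)·(1 − σ(γ))·σ(θ) · ( ∑_{c : S → Bool, c e = false} (∏_{s ≠ e} if c s then p s else 1 − p s) · (L(Function.update c e true) − L(Function.update c e false)) + λ ) (in the sense of HasDerivAt). -/
/-- The logistic sigmoid `σ(x) = (1 + exp(-x))⁻¹`. -/
noncomputable def logisticSigmoid (x : ℝ) : ℝ := (1 + Real.exp (-x))⁻¹

/-!
Only the factor of the edge `e` in the sampling probability depends on `γ`. Splitting each
configuration into its value at `e` and its restriction to the other edges, the regularized loss
becomes the affine function `q * (D + λ) + B` of `q = σ(γ) σ(θ)`, where `D` is the expected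
difference of the losses with the edge `e` present and absent. The chain rule with
`σ' = σ (1 - σ)` then gives the formula.
-/

open Finset Function

section Configurations

variable {S β : Type*} [Fintype S] [DecidableEq S]

theorem Fintype.sum_pi_eq_sum_filter_sum_update [Fintype β] [DecidableEq β] {M : Type*}
    [AddCommMonoid M] (e : S) (b₀ : β) (f : (S → β) → M) :
    ∑ c, f c = ∑ c ∈ univ.filter (fun c : S → β => c e = b₀), ∑ b, f (update c e b) := by
  rw [← sum_product']
  refine sum_nbij' (fun c => (update c e b₀, c e)) (fun x => update x.1 e x.2)
    (by simp) (by simp) (by simp) ?_ (by simp)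
  rintro ⟨c, b⟩ hc
  simp only [mem_product, mem_filter] at hc
  simp [← hc.1.2]

theorem Fintype.prod_apply_update {M : Type*} [CommMonoid M] (w : S → β → M) (c : S → β)
    (e : S) (b : β) :
    ∏ s, w s (update c e b s) = w e b * ∏ s ∈ univ.erase e, w s (c s) := by
  simp_rw [apply_update w c e b, prod_update_of_mem (mem_univ e), sdiff_singleton_eq_erase]

theorem Fintype.sum_prod_mul_eq_sum_filter [Fintype β] [DecidableEq β] {R : Type*}
    [CommSemiring R] (w : S → β → R) (L : (S → β) → R) (e : S) (b₀ : β) :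
    ∑ c, (∏ s, w s (c s)) * L c =
      ∑ c ∈ univ.filter (fun c : S → β => c e = b₀),
        (∏ s ∈ univ.erase e, w s (c s)) * ∑ b, w e b * L (update c e b) := by
  rw [sum_pi_eq_sum_filter_sum_update e b₀]
  refine Finset.sum_congr rfl fun c _ => ?_
  simp_rw [prod_apply_update, mul_sum]
  exact Finset.sum_congr rfl fun b _ => by ring

end Configurations

theorem sum_prod_ite_mul_eq_mul_add {S R : Type*} [Fintype S] [DecidableEq S] [CommRing R]
    (e : S) (q : R) (v : S → Bool → R) (L : (S → Bool) → R) :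
    ∑ c : S → Bool, (∏ s, if s = e then (if c s then q else 1 - q) else v s (c s)) * L c =
      q * ∑ c ∈ univ.filter (fun c : S → Bool => c e = false),
          (∏ s ∈ univ.erase e, v s (c s)) * (L (update c e true) - L (update c e false)) +
        ∑ c ∈ univ.filter (fun c : S → Bool => c e = false),
          (∏ s ∈ univ.erase e, v s (c s)) * L (update c e false) := by
  refine (Fintype.sum_prod_mul_eq_sum_filter
    (fun s x => if s = e then (if x then q else 1 - q) else v s x) L e false).trans ?_
  rw [mul_sum, ← sum_add_distrib]
  refine sum_congr rfl fun c _ => ?_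
  have hrest : ∏ s ∈ univ.erase e, (if s = e then (if c s then q else 1 - q) else v s (c s)) =
      ∏ s ∈ univ.erase e, v s (c s) :=
    prod_congr rfl fun s hs => if_neg (ne_of_mem_erase hs)
  simp only [hrest, Fintype.sum_bool, if_true, Bool.false_eq_true, if_false]
  ring

/-- ENCO gradient formula for the edge-existence parameter `γ`
(Equation (8) of Appendix C.1). -/
theorem enco_gamma_gradient
    {S : Type*} [Fintype S] [DecidableEq S] (e : S) (p : S → ℝ)
    (θ lam γ : ℝ) (L : (S → Bool) → ℝ) :
    HasDerivAt
      (fun g : ℝ =>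
        (∑ c : S → Bool,
          (∏ s : S,
            if s = e then
              (if c s then logisticSigmoid g * logisticSigmoid θ
               else 1 - logisticSigmoid g * logisticSigmoid θ)
            else (if c s then p s else 1 - p s)) * L c)
          + lam * logisticSigmoid g * logisticSigmoid θ)
      (logisticSigmoid γ * (1 - logisticSigmoid γ) * logisticSigmoid θ *
        ((∑ c ∈ Finset.univ.filter (fun c : S → Bool => c e = false),
            (∏ s ∈ Finset.univ.erase e, if c s then p s else 1 - p s) *
              (L (Function.update c e true) - L (Function.update c e false)))
          + lam))
      γ := by
  set D := ∑ c ∈ univ.filter (fun c : S → Bool => c e = false),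
    (∏ s ∈ univ.erase e, if c s then p s else 1 - p s) *
      (L (update c e true) - L (update c e false))
  set B := ∑ c ∈ univ.filter (fun c : S → Bool => c e = false),
    (∏ s ∈ univ.erase e, if c s then p s else 1 - p s) * L (update c e false)
  have hq : HasDerivAt (fun g => logisticSigmoid g * logisticSigmoid θ)
      (logisticSigmoid γ * (1 - logisticSigmoid γ) * logisticSigmoid θ) γ :=
    (Real.hasDerivAt_sigmoid γ).mul_const _
  refine ((hq.mul_const (D + lam)).add_const B).congr_of_eventuallyEq
    (Filter.Eventually.of_forall fun g => ?_)
  dsimp only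
  rw [sum_prod_ite_mul_eq_mul_add e _ (fun s x => if x then p s else 1 - p s) L]
  ring
end

section
/- ENCO gradient formula for the edge-orientation parameter θ (Equation (9) of Appendix C.1), using the antisymmetry θ_{ji} = −θ_{ij}: the derivative with respect to θ_{ij} of the mixture of expected losses under interventions on node i and on node j equals σ'(θ_{ij})·( p(I_i)·σ(γ_{ij})·E_{I_i,C_{−ij}}[L_{X_i→X_j} − L_{X_i↛X_j}] − p(I_j)·σ(γ_{ji})·E_{I_j,C_{−ij}}[L_{X_j→X_i} − L_{X_j↛X_i}] ). Precisely: let S be a finite type with distinct elements e e' : S, let p : S → ℝ, γ₁ γ₂ w₁ w₂ θ : ℝ, and L₁ L₂ : (S → Bool) → ℝ. Define F : ℝ → ℝ by F(t) = w₁ · ∑_{c : S → Bool} (∏_{s : S} if s = e then (if c s then σ(γ₁)·σ(t) else 1 − σ(γ₁)·σ(t)) else (if c s then p s else 1 − p s)) · L₁(c) + w₂ · ∑_{c : S → Bool} (∏_{s : S} if s = e' then (if c s then σ(γ₂)·σ(−t) else 1 − σ(γ₂)·σ(−t)) else (if c s then p s else 1 − p s)) · L₂(c). Then F has derivative at t =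 θ equal to σ(θ)·(1 − σ(θ)) · ( w₁·σ(γ₁) · ∑_{c : S → Bool, c e = false} (∏_{s ≠ e} if c s then p s else 1 − p s) · (L₁(Function.update c e true) − L₁(Function.update c e false)) − w₂·σ(γ₂) · ∑_{c : S → Bool, c e' = false} (∏_{s ≠ e'} if c s then p s else 1 − p s) · (L₂(Function.update c e' true) − L₂(Function.update c e' false)) ) (in the sense of HasDerivAt). -/
/-!
Conditioning on the value of the single edge `e`, the expected loss is affine in that edge's
sampling probability `q`, with slope the expected difference of the loss with and without `e`.
Hence the θ-derivative is that slope times the derivative of `σ(γ₁)·σ(θ)`, respectively of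
`σ(γ₂)·σ(−θ)`, and `σ(−θ)` has derivative `−σ(θ)(1 − σ(θ))`.
-/

open Finset Function

theorem logisticSigmoid_neg (x : ℝ) : logisticSigmoid (-x) = 1 - logisticSigmoid x :=
  Real.sigmoid_neg x

theorem hasDerivAt_logisticSigmoid (x : ℝ) :
    HasDerivAt logisticSigmoid (logisticSigmoid x * (1 - logisticSigmoid x)) x :=
  Real.hasDerivAt_sigmoid x

theorem hasDerivAt_logisticSigmoid_neg (x : ℝ) :
    HasDerivAt (fun t => logisticSigmoid (-t))
      (-(logisticSigmoid x * (1 - logisticSigmoid x))) x := by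
  refine ((hasDerivAt_logisticSigmoid (-x)).comp x (hasDerivAt_neg x)).congr_deriv ?_
  rw [logisticSigmoid_neg]
  ring

section BooleanConfigurations

variable {S : Type*} [Fintype S] [DecidableEq S]

theorem sum_eq_sum_filter_sum_update {M : Type*} [AddCommMonoid M] (e : S)
    (f : (S → Bool) → M) :
    ∑ c, f c = ∑ c ∈ univ.filter (fun c : S → Bool => c e = false), ∑ b, f (update c e b) := by
  rw [← sum_product']
  refine sum_nbij' (fun c => (update c e false, c e)) (fun x => update x.1 e x.2)
    (by simp) (by simp) (fun c _ => by simp) (fun x hx => ?_) (fun c _ => by simp)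
  obtain ⟨hx, -⟩ := mem_product.1 hx
  ext1 <;> simp [(mem_filter.1 hx).2]

theorem prod_ite_update_eq_mul (e : S) (p : S → ℝ) (q : ℝ) (c : S → Bool) (b : Bool) :
    (∏ s, if s = e then (if update c e b s then q else 1 - q)
      else (if update c e b s then p s else 1 - p s))
      = (if b then q else 1 - q) * ∏ s ∈ univ.erase e, (if c s then p s else 1 - p s) := by
  rw [← mul_prod_erase univ _ (mem_univ e)]
  refine congrArg₂ _ (by simp) (prod_congr rfl fun s hs => ?_)
  rw [if_neg (ne_of_mem_erase hs), update_of_ne (ne_of_mem_erase hs)]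

theorem sum_prod_bernoulli_mul_eq_add_mul (e : S) (p : S → ℝ) (L : (S → Bool) → ℝ) (q : ℝ) :
    ∑ c : S → Bool,
        (∏ s, if s = e then (if c s then q else 1 - q) else (if c s then p s else 1 - p s)) * L c
      = (∑ c ∈ univ.filter (fun c : S → Bool => c e = false),
            (∏ s ∈ univ.erase e, if c s then p s else 1 - p s) * L (update c e false))
        + q * ∑ c ∈ univ.filter (fun c : S → Bool => c e = false),
            (∏ s ∈ univ.erase e, if c s then p s else 1 - p s) *
              (L (update c e true) - L (update c e false)) := by
  rw [sum_eq_sum_filter_sum_update e, mul_sum, ← sum_add_distrib]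
  refine sum_congr rfl fun c _ => ?_
  simp only [Fintype.sum_bool, prod_ite_update_eq_mul, if_true, Bool.false_eq_true,
    if_false]
  ring

theorem hasDerivAt_sum_prod_bernoulli_mul (e : S) (p : S → ℝ) (L : (S → Bool) → ℝ)
    {Q : ℝ → ℝ} {q' x : ℝ} (hQ : HasDerivAt Q q' x) :
    HasDerivAt (fun t => ∑ c : S → Bool,
        (∏ s, if s = e then (if c s then Q t else 1 - Q t) else (if c s then p s else 1 - p s))
          * L c)
      (q' * ∑ c ∈ univ.filter (fun c : S → Bool => c e = false),
        (∏ s ∈ univ.erase e, if c s then p s else 1 - p s) *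
          (L (update c e true) - L (update c e false))) x := by
  simp only [sum_prod_bernoulli_mul_eq_add_mul]
  exact (hQ.mul_const _).const_add _

end BooleanConfigurations

theorem enco_theta_gradient_general
    {S : Type*} [Fintype S] [DecidableEq S] (e e' : S) (p : S → ℝ)
    (γ₁ γ₂ w₁ w₂ θ : ℝ) (L₁ L₂ : (S → Bool) → ℝ) :
    HasDerivAt
      (fun t : ℝ =>
        w₁ * ∑ c : S → Bool,
          (∏ s : S,
            if s = e then
              (if c s then logisticSigmoid γ₁ * logisticSigmoid t
               else 1 - logisticSigmoid γ₁ * logisticSigmoid t)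
            else (if c s then p s else 1 - p s)) * L₁ c
        + w₂ * ∑ c : S → Bool,
          (∏ s : S,
            if s = e' then
              (if c s then logisticSigmoid γ₂ * logisticSigmoid (-t)
               else 1 - logisticSigmoid γ₂ * logisticSigmoid (-t))
            else (if c s then p s else 1 - p s)) * L₂ c)
      (logisticSigmoid θ * (1 - logisticSigmoid θ) *
        (w₁ * logisticSigmoid γ₁ *
          (∑ c ∈ Finset.univ.filter (fun c : S → Bool => c e = false),
            (∏ s ∈ Finset.univ.erase e, if c s then p s else 1 - p s) *
              (L₁ (Function.update c e true) - L₁ (Function.update c e false)))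
        - w₂ * logisticSigmoid γ₂ *
          (∑ c ∈ Finset.univ.filter (fun c : S → Bool => c e' = false),
            (∏ s ∈ Finset.univ.erase e', if c s then p s else 1 - p s) *
              (L₂ (Function.update c e' true) - L₂ (Function.update c e' false)))))
      θ := by
  have h₁ := hasDerivAt_sum_prod_bernoulli_mul e p L₁
    ((hasDerivAt_logisticSigmoid θ).const_mul (logisticSigmoid γ₁))
  have h₂ := hasDerivAt_sum_prod_bernoulli_mul e' p L₂
    ((hasDerivAt_logisticSigmoid_neg θ).const_mul (logisticSigmoid γ₂))
  refine ((h₁.const_mul w₁).add (h₂.const_mul w₂)).congr_deriv ?_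
  ring

/-- ENCO gradient formula for the edge-orientation parameter `θ`
(Equation (9) of Appendix C.1), using the antisymmetry `θ_{ji} = −θ_{ij}`. -/
theorem enco_theta_gradient
    {S : Type*} [Fintype S] [DecidableEq S] (e e' : S) (hee' : e ≠ e') (p : S → ℝ)
    (γ₁ γ₂ w₁ w₂ θ : ℝ) (L₁ L₂ : (S → Bool) → ℝ) :
    HasDerivAt
      (fun t : ℝ =>
        w₁ * ∑ c : S → Bool,
          (∏ s : S,
            if s = e then
              (if c s then logisticSigmoid γ₁ * logisticSigmoid t
               else 1 - logisticSigmoid γ₁ * logisticSigmoid t)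
            else (if c s then p s else 1 - p s)) * L₁ c
        + w₂ * ∑ c : S → Bool,
          (∏ s : S,
            if s = e' then
              (if c s then logisticSigmoid γ₂ * logisticSigmoid (-t)
               else 1 - logisticSigmoid γ₂ * logisticSigmoid (-t))
            else (if c s then p s else 1 - p s)) * L₂ c)
      (logisticSigmoid θ * (1 - logisticSigmoid θ) *
        (w₁ * logisticSigmoid γ₁ *
          (∑ c ∈ Finset.univ.filter (fun c : S → Bool => c e = false),
            (∏ s ∈ Finset.univ.erase e, if c s then p s else 1 - p s) *
              (L₁ (Function.update c e true) - L₁ (Function.update c e false)))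
        - w₂ * logisticSigmoid γ₂ *
          (∑ c ∈ Finset.univ.filter (fun c : S → Bool => c e' = false),
            (∏ s ∈ Finset.univ.erase e', if c s then p s else 1 - p s) *
              (L₂ (Function.update c e' true) - L₂ (Function.update c e' false)))))
      θ :=
  enco_theta_gradient_general e e' p γ₁ γ₂ w₁ w₂ θ L₁ L₂
end
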